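/- arXiv:1511.00976 — 2 statements merged into one kernel-verified Lean document; each statement's English description precedes it below -/
import Mathlib

section
/- Let A and B be testers with the same normalization state ρ and canonical POVMs P and Q. If P and Q are λ-compatible as POVMs, then A and B are λ-compatible as testers. Consequently R_T(A,B) ≤ R_M(P,Q). -/
open Matrix Finset
open scoped Kronecker ComplexOrder

noncomputable section

variable {n m : Type*} [Fintype n] [DecidableEq n] [Fintype m] [DecidableEq m]

/-- A density operator: positive semidefinite with unit trace. -/
def IsDensity (ρ : Matrix n n ℂ) : Prop := ρ.PosSemidef ∧ ρ.trace = 1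

/-- A quantum tester on `H₁ ⊗ H₀` with normalization state `ρ` on `H₀`:
a family of positive semidefinite operators summing to `I₁ ⊗ ρ`. -/
def IsTester {S : Type*} [Fintype S] (T : S → Matrix (m × n) (m × n) ℂ)
    (ρ : Matrix n n ℂ) : Prop :=
  IsDensity ρ ∧ (∀ j, (T j).PosSemidef) ∧
    ∑ j, T j = (1 : Matrix m m ℂ) ⊗ₖ ρ

/-- Two testers are compatible if a joint tester with the correct marginals exists. -/
def TesterCompatible {S S' : Type*} [Fintype S] [Fintype S']
    (A : S → Matrix (m × n) (m × n) ℂ) (B : S' → Matrix (m × n) (m × n) ℂ) : Prop :=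
  ∃ (C : S × S' → Matrix (m × n) (m × n) ℂ) (τ : Matrix n n ℂ),
    IsTester C τ ∧ (∀ j, ∑ k, C (j, k) = A j) ∧ (∀ k, ∑ j, C (j, k) = B k)

/-- λ-compatibility of testers: noisy mixtures become compatible. -/
def TesterLambdaCompatible {S S' : Type*} [Fintype S] [Fintype S']
    (A : S → Matrix (m × n) (m × n) ℂ) (B : S' → Matrix (m × n) (m × n) ℂ)
    (lam : ℝ) : Prop :=
  ∃ (NA : S → Matrix (m × n) (m × n) ℂ) (NB : S' → Matrix (m × n) (m × n) ℂ)
    (ρ' σ' : Matrix n n ℂ), IsTester NA ρ' ∧ IsTester NB σ' ∧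
    TesterCompatible (fun j => (1 - lam) • A j + lam • NA j)
      (fun k => (1 - lam) • B k + lam • NB k)

/-- The robustness of incompatibility of two testers. -/
noncomputable def TesterRobustness {S S' : Type*} [Fintype S] [Fintype S']
    (A : S → Matrix (m × n) (m × n) ℂ) (B : S' → Matrix (m × n) (m × n) ℂ) : ℝ :=
  sInf {lam : ℝ | lam ∈ Set.Icc (0 : ℝ) 1 ∧ TesterLambdaCompatible A B lam}

/-- The robustness of state incompatibility. -/
noncomputable def StateRobustness (ρ σ : Matrix n n ℂ) : ℝ :=
  sInf {lam : ℝ | lam ∈ Set.Icc (0 : ℝ) 1 ∧ ∃ ρ' σ' : Matrix n n ℂ,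
    IsDensity ρ' ∧ IsDensity σ' ∧
    (1 - lam) • ρ + lam • ρ' = (1 - lam) • σ + lam • σ'}

/-- The trace norm of a matrix, as the sum of its singular values. -/
noncomputable def traceNorm (X : Matrix n n ℂ) : ℝ :=
  ∑ i, Real.sqrt ((Matrix.posSemidef_conjTranspose_mul_self X).1.eigenvalues i)

/-- Inverse of the square root of a Hermitian matrix, taken on its support. -/
noncomputable def invSqrt {ρ : Matrix n n ℂ} (hρ : ρ.IsHermitian) : Matrix n n ℂ :=
  (Matrix.IsHermitian.eigenvectorUnitary hρ : Matrix n n ℂ) *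
    Matrix.diagonal (fun i => if hρ.eigenvalues i = 0 then (0 : ℂ)
      else ((Real.sqrt (hρ.eigenvalues i))⁻¹ : ℝ)) *
    (Matrix.IsHermitian.eigenvectorUnitary hρ : Matrix n n ℂ)ᴴ

/-- Orthogonal projection onto the support of a Hermitian matrix. -/
noncomputable def suppProj {ρ : Matrix n n ℂ} (hρ : ρ.IsHermitian) : Matrix n n ℂ :=
  (Matrix.IsHermitian.eigenvectorUnitary hρ : Matrix n n ℂ) *
    Matrix.diagonal (fun i => if hρ.eigenvalues i = 0 then (0 : ℂ) else 1) *
    (Matrix.IsHermitian.eigenvectorUnitary hρ : Matrix n n ℂ)ᴴ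

/-- A POVM with unit `e`: positive semidefinite operators summing to `e`. -/
def IsPOVMOn {S : Type*} [Fintype S] (e : Matrix n n ℂ) (P : S → Matrix n n ℂ) : Prop :=
  (∀ j, (P j).PosSemidef) ∧ ∑ j, P j = e

/-- Compatibility of POVMs with unit `e`. -/
def POVMCompatibleOn {S S' : Type*} [Fintype S] [Fintype S'] (e : Matrix n n ℂ)
    (P : S → Matrix n n ℂ) (Q : S' → Matrix n n ℂ) : Prop :=
  ∃ R : S × S' → Matrix n n ℂ, IsPOVMOn e R ∧
    (∀ j, ∑ k, R (j, k) = P j) ∧ (∀ k, ∑ j, R (j, k) = Q k)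

/-- λ-compatibility of POVMs with unit `e`. -/
def POVMLambdaCompatibleOn {S S' : Type*} [Fintype S] [Fintype S'] (e : Matrix n n ℂ)
    (P : S → Matrix n n ℂ) (Q : S' → Matrix n n ℂ) (lam : ℝ) : Prop :=
  ∃ (JP : S → Matrix n n ℂ) (JQ : S' → Matrix n n ℂ),
    IsPOVMOn e JP ∧ IsPOVMOn e JQ ∧
    POVMCompatibleOn e (fun j => (1 - lam) • P j + lam • JP j)
      (fun k => (1 - lam) • Q k + lam • JQ k)

/-- The robustness of incompatibility of two POVMs with unit `e`. -/
noncomputable def POVMRobustnessOn {S S' : Type*} [Fintype S] [Fintype S'] (e : Matrix n n ℂ)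
    (P : S → Matrix n n ℂ) (Q : S' → Matrix n n ℂ) : ℝ :=
  sInf {lam : ℝ | lam ∈ Set.Icc (0 : ℝ) 1 ∧ POVMLambdaCompatibleOn e P Q lam}

/-- The canonical POVM associated with a tester with normalization state `ρ`. -/
noncomputable def canonicalPOVM {S : Type*} [Fintype S]
    (T : S → Matrix (m × n) (m × n) ℂ) {ρ : Matrix n n ℂ} (hρ : ρ.IsHermitian)
    (j : S) : Matrix (m × n) (m × n) ℂ :=
  ((1 : Matrix m m ℂ) ⊗ₖ invSqrt hρ) * T j * ((1 : Matrix m m ℂ) ⊗ₖ invSqrt hρ)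

end

/-!
Conjugation `X ↦ C X Cᴴ` with `C = I ⊗ √ρ` is linear and preserves positivity, so it carries
POVMs with unit `I ⊗ Πρ` (`Πρ` the support projection of `ρ`) to families summing to `I ⊗ ρ`,
i.e. to testers with normalization `ρ`, and it respects marginals and noisy mixtures. It sends the
canonical POVM of a tester `T` back to `T`: since `0 ≤ Tⱼ ≤ I ⊗ ρ`, every `Tⱼ` is supported on
`I ⊗ Πρ`, where `√ρ · ρ^{-1/2}` acts as the identity. So every witness of `λ`-compatibility of the
canonical POVMs becomes one for the testers.
-/

open scoped MatrixOrder

section FunctionalCalculus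

variable {n : Type*} [Fintype n] [DecidableEq n]

lemma Matrix.cfc_mul_cfc (f g : ℝ → ℝ) (A : Matrix n n ℂ) :
    cfc f A * cfc g A = cfc (fun x => f x * g x) A :=
  (cfc_mul f g A (finite_real_spectrum.continuousOn f) (finite_real_spectrum.continuousOn g)).symm

lemma Matrix.conjTranspose_cfc (f : ℝ → ℝ) (A : Matrix n n ℂ) : (cfc f A)ᴴ = cfc f A :=
  (cfc_predicate f A).star_eq

lemma invSqrt_eq_cfc {ρ : Matrix n n ℂ} (hρ : ρ.IsHermitian) :
    invSqrt hρ = cfc (fun x : ℝ => if x = 0 then 0 else (√x)⁻¹) ρ := by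
  rw [hρ.cfc_eq, Matrix.IsHermitian.cfc, Unitary.conjStarAlgAut_apply, invSqrt,
    Matrix.star_eq_conjTranspose]
  congr 3
  funext i
  simp only [Function.comp_apply]
  split_ifs <;> simp

lemma suppProj_eq_cfc {ρ : Matrix n n ℂ} (hρ : ρ.IsHermitian) :
    suppProj hρ = cfc (fun x : ℝ => if x = 0 then 0 else 1) ρ := by
  rw [hρ.cfc_eq, Matrix.IsHermitian.cfc, Unitary.conjStarAlgAut_apply, suppProj,
    Matrix.star_eq_conjTranspose]
  congr 3
  funext i
  simp only [Function.comp_apply]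
  split_ifs <;> simp

lemma suppProj_posSemidef {ρ : Matrix n n ℂ} (hρ : ρ.IsHermitian) : (suppProj hρ).PosSemidef := by
  rw [suppProj_eq_cfc]
  exact (cfc_nonneg fun x _ => by split_ifs <;> norm_num).posSemidef

lemma mul_suppProj_self {ρ : Matrix n n ℂ} (hρ : ρ.IsHermitian) : ρ * suppProj hρ = ρ := by
  calc ρ * suppProj hρ = cfc id ρ * cfc (fun x : ℝ => if x = 0 then 0 else 1) ρ := by
        rw [suppProj_eq_cfc, cfc_id ℝ ρ hρ.isSelfAdjoint]
    _ = cfc id ρ := by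
        rw [Matrix.cfc_mul_cfc]
        exact cfc_congr fun x _ => by by_cases h : x = 0 <;> simp [h]
    _ = ρ := cfc_id ℝ ρ hρ.isSelfAdjoint

variable {ρ : Matrix n n ℂ}

lemma cfc_sqrt_mul_invSqrt (hρ : ρ.PosSemidef) : cfc Real.sqrt ρ * invSqrt hρ.1 = suppProj hρ.1 := by
  rw [invSqrt_eq_cfc, suppProj_eq_cfc, Matrix.cfc_mul_cfc]
  refine cfc_congr fun x hx => ?_
  have := spectrum_nonneg_of_nonneg hρ.nonneg hx
  split_ifs with h
  · simp
  · exact mul_inv_cancel₀ (by positivity)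

lemma invSqrt_mul_cfc_sqrt (hρ : ρ.PosSemidef) : invSqrt hρ.1 * cfc Real.sqrt ρ = suppProj hρ.1 := by
  rw [invSqrt_eq_cfc, ← (cfc_commute_cfc _ _ ρ).eq, ← invSqrt_eq_cfc hρ.1, cfc_sqrt_mul_invSqrt hρ]

lemma cfc_sqrt_mul_suppProj_mul_cfc_sqrt (hρ : ρ.PosSemidef) :
    cfc Real.sqrt ρ * suppProj hρ.1 * cfc Real.sqrt ρ = ρ := by
  rw [suppProj_eq_cfc, Matrix.cfc_mul_cfc, Matrix.cfc_mul_cfc]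
  refine (cfc_congr fun x hx => ?_).trans (cfc_id ℝ ρ hρ.1.isSelfAdjoint)
  have := spectrum_nonneg_of_nonneg hρ.nonneg hx
  split_ifs with h
  · simp [h]
  · simp [Real.mul_self_sqrt this]

end FunctionalCalculus

lemma Matrix.mul_eq_zero_of_nonneg_of_le {N : Type*} [Fintype N] [DecidableEq N]
    {X Y K : Matrix N N ℂ} (hX : 0 ≤ X) (hXY : X ≤ Y) (hYK : Y * K = 0) : X * K = 0 := by
  obtain ⟨B, rfl⟩ := CStarAlgebra.nonneg_iff_eq_star_mul_self.mp hX
  have hconj : star K * (star B * B) * K = 0 := by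
    refine le_antisymm ?_ (star_left_conjugate_nonneg hX K)
    simpa [Matrix.mul_assoc, hYK] using star_left_conjugate_le_conjugate hXY K
  have hBK : B * K = 0 := by
    rwa [← Matrix.conjTranspose_mul_self_eq_zero, Matrix.conjTranspose_mul, Matrix.mul_assoc,
      ← Matrix.mul_assoc _ B, ← Matrix.mul_assoc]
  rw [Matrix.mul_assoc, hBK, Matrix.mul_zero]

section Conjugation

variable {N : Type*} {S S' : Type*} [Fintype S] [Fintype S']
  {e : Matrix N N ℂ} {P : S → Matrix N N ℂ} {Q : S' → Matrix N N ℂ}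

lemma isPOVMOn_single [DecidableEq S] (he : e.PosSemidef) (j₀ : S) :
    IsPOVMOn e (Pi.single j₀ e) :=
  ⟨fun j => by by_cases h : j = j₀ <;> simp [h, he, Matrix.PosSemidef.zero], by simp⟩

lemma POVMCompatibleOn.single [DecidableEq S] [DecidableEq S'] (he : e.PosSemidef) (j₀ : S)
    (k₀ : S') : POVMCompatibleOn e (Pi.single j₀ e) (Pi.single k₀ e) := by
  refine ⟨Pi.single (j₀, k₀) e, isPOVMOn_single he _, fun j => ?_, fun k => ?_⟩
  · by_cases h : j = j₀ <;> simp [Pi.single_apply, h]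
  · by_cases h : k = k₀ <;> simp [Pi.single_apply, h]

lemma povmLambdaCompatibleOn_one [Nonempty S] [Nonempty S'] (he : e.PosSemidef) :
    POVMLambdaCompatibleOn e P Q 1 := by
  classical
  let j₀ := Classical.arbitrary S
  let k₀ := Classical.arbitrary S'
  refine ⟨_, _, isPOVMOn_single he j₀, isPOVMOn_single he k₀, ?_⟩
  simpa only [sub_self, zero_smul, one_smul, zero_add] using POVMCompatibleOn.single he j₀ k₀

lemma povmLambdaCompatibleOn_of_isEmpty [IsEmpty N] (lam : ℝ) :
    POVMLambdaCompatibleOn e P Q lam := by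
  have hpsd (X : Matrix N N ℂ) : X.PosSemidef := Subsingleton.elim 0 X ▸ .zero
  exact ⟨0, 0, ⟨fun _ => hpsd _, Subsingleton.elim _ _⟩, ⟨fun _ => hpsd _, Subsingleton.elim _ _⟩,
    0, ⟨fun _ => hpsd _, Subsingleton.elim _ _⟩, fun _ => Subsingleton.elim _ _,
    fun _ => Subsingleton.elim _ _⟩

variable [Fintype N] (C : Matrix N N ℂ)

lemma IsPOVMOn.conj (h : IsPOVMOn e P) :
    IsPOVMOn (C * e * Cᴴ) (fun j => C * P j * Cᴴ) :=
  ⟨fun j => (h.1 j).mul_mul_conjTranspose_same C, by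
    rw [← Finset.sum_mul, ← Finset.mul_sum, h.2]⟩

lemma POVMCompatibleOn.conj (h : POVMCompatibleOn e P Q) :
    POVMCompatibleOn (C * e * Cᴴ) (fun j => C * P j * Cᴴ) (fun k => C * Q k * Cᴴ) := by
  obtain ⟨R, hR, hRP, hRQ⟩ := h
  exact ⟨fun p => C * R p * Cᴴ, hR.conj C,
    fun j => by rw [← Finset.sum_mul, ← Finset.mul_sum, hRP],
    fun k => by rw [← Finset.sum_mul, ← Finset.mul_sum, hRQ]⟩

lemma POVMLambdaCompatibleOn.conj {lam : ℝ} (h : POVMLambdaCompatibleOn e P Q lam) :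
    POVMLambdaCompatibleOn (C * e * Cᴴ) (fun j => C * P j * Cᴴ) (fun k => C * Q k * Cᴴ) lam := by
  obtain ⟨JP, JQ, hJP, hJQ, hPQ⟩ := h
  refine ⟨_, _, hJP.conj C, hJQ.conj C, ?_⟩
  convert hPQ.conj C using 2 <;>
    simp only [Matrix.mul_add, Matrix.add_mul, Matrix.mul_smul, Matrix.smul_mul]

end Conjugation

lemma TesterLambdaCompatible.of_povmLambdaCompatibleOn {n m : Type*} [Fintype n] [DecidableEq m]
    {S S' : Type*} [Fintype S] [Fintype S'] {A : S → Matrix (m × n) (m × n) ℂ}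
    {B : S' → Matrix (m × n) (m × n) ℂ} {ρ : Matrix n n ℂ} {lam : ℝ} (hρ : IsDensity ρ)
    (h : POVMLambdaCompatibleOn ((1 : Matrix m m ℂ) ⊗ₖ ρ) A B lam) :
    TesterLambdaCompatible A B lam := by
  obtain ⟨JP, JQ, hJP, hJQ, R, hR, hRA, hRB⟩ := h
  exact ⟨JP, JQ, ρ, ρ, ⟨hρ, hJP⟩, ⟨hρ, hJQ⟩, R, ρ, ⟨hρ, hR⟩, hRA, hRB⟩

section Testers

variable {n m : Type*} [Fintype n] [Fintype m] [DecidableEq m]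
  {S S' : Type*} [Fintype S] [Fintype S'] {ρ : Matrix n n ℂ} {T : S → Matrix (m × n) (m × n) ℂ}

lemma IsTester.nonempty [Nonempty m] (hT : IsTester T ρ) : Nonempty S := by
  by_contra hS
  rw [not_nonempty_iff] at hS
  have h := congrArg Matrix.trace hT.2.2
  rw [Finset.univ_eq_empty, Finset.sum_empty, Matrix.trace_zero, Matrix.trace_kronecker,
    Matrix.trace_one, hT.1.2, mul_one] at h
  exact Nat.cast_ne_zero.mpr Fintype.card_ne_zero h.symm

variable [DecidableEq n]

lemma IsTester.mul_one_kronecker_suppProj (hT : IsTester T ρ) (j : S) :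
    T j * ((1 : Matrix m m ℂ) ⊗ₖ suppProj hT.1.1.1) = T j := by
  have h : T j * (1 - (1 : Matrix m m ℂ) ⊗ₖ suppProj hT.1.1.1) = 0 := by
    refine Matrix.mul_eq_zero_of_nonneg_of_le (Y := (1 : Matrix m m ℂ) ⊗ₖ ρ)
      (hT.2.1 j).nonneg ?_ ?_
    · rw [← hT.2.2]
      exact Finset.single_le_sum (fun i _ => (hT.2.1 i).nonneg) (Finset.mem_univ j)
    · rw [Matrix.mul_sub, Matrix.mul_one, ← Matrix.mul_kronecker_mul, Matrix.one_mul,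
        mul_suppProj_self, sub_self]
  rwa [Matrix.mul_sub, Matrix.mul_one, sub_eq_zero, eq_comm] at h

lemma IsTester.one_kronecker_suppProj_mul (hT : IsTester T ρ) (j : S) :
    ((1 : Matrix m m ℂ) ⊗ₖ suppProj hT.1.1.1) * T j = T j := by
  simpa [(hT.2.1 j).1.eq, Matrix.conjTranspose_kronecker, (suppProj_posSemidef hT.1.1.1).1.eq]
    using congrArg Matrix.conjTranspose (hT.mul_one_kronecker_suppProj j)

lemma IsTester.conj_canonicalPOVM (hT : IsTester T ρ) (j : S) :
    ((1 : Matrix m m ℂ) ⊗ₖ cfc Real.sqrt ρ) * canonicalPOVM T hT.1.1.1 j *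
      ((1 : Matrix m m ℂ) ⊗ₖ cfc Real.sqrt ρ)ᴴ = T j := by
  rw [canonicalPOVM, Matrix.conjTranspose_kronecker, Matrix.conjTranspose_one,
    Matrix.conjTranspose_cfc]
  simp only [Matrix.mul_assoc]
  rw [← Matrix.mul_kronecker_mul, Matrix.one_mul, invSqrt_mul_cfc_sqrt hT.1.1,
    hT.mul_one_kronecker_suppProj, ← Matrix.mul_assoc, ← Matrix.mul_kronecker_mul, Matrix.one_mul,
    cfc_sqrt_mul_invSqrt hT.1.1, hT.one_kronecker_suppProj_mul]

lemma one_kronecker_cfc_sqrt_conj_suppProj (hρ : ρ.PosSemidef) :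
    ((1 : Matrix m m ℂ) ⊗ₖ cfc Real.sqrt ρ) * ((1 : Matrix m m ℂ) ⊗ₖ suppProj hρ.1) *
      ((1 : Matrix m m ℂ) ⊗ₖ cfc Real.sqrt ρ)ᴴ = (1 : Matrix m m ℂ) ⊗ₖ ρ := by
  rw [Matrix.conjTranspose_kronecker, Matrix.conjTranspose_one, Matrix.conjTranspose_cfc,
    ← Matrix.mul_kronecker_mul, ← Matrix.mul_kronecker_mul, Matrix.one_mul, Matrix.one_mul,
    cfc_sqrt_mul_suppProj_mul_cfc_sqrt hρ]

theorem IsTester.testerLambdaCompatible_of_canonicalPOVM {A : S → Matrix (m × n) (m × n) ℂ}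
    {B : S' → Matrix (m × n) (m × n) ℂ} (hA : IsTester A ρ) (hB : IsTester B ρ) {lam : ℝ}
    (h : POVMLambdaCompatibleOn ((1 : Matrix m m ℂ) ⊗ₖ suppProj hA.1.1.1)
      (canonicalPOVM A hA.1.1.1) (canonicalPOVM B hA.1.1.1) lam) :
    TesterLambdaCompatible A B lam := by
  have h' := h.conj ((1 : Matrix m m ℂ) ⊗ₖ cfc Real.sqrt ρ)
  simp only [one_kronecker_cfc_sqrt_conj_suppProj hA.1.1, hA.conj_canonicalPOVM,
    hB.conj_canonicalPOVM] at h'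
  exact .of_povmLambdaCompatibleOn hA.1 h'

end Testers

/-- for testers with the same normalization state, λ-compatibility
of the canonical POVMs implies λ-compatibility of the testers; hence
`R_T(A,B) ≤ R_M(P,Q)`. -/
theorem stmt15 {n m : Type*} [Fintype n] [DecidableEq n] [Fintype m] [DecidableEq m]
    {S S' : Type*} [Fintype S] [Fintype S']
    (A : S → Matrix (m × n) (m × n) ℂ) (B : S' → Matrix (m × n) (m × n) ℂ)
    (ρ : Matrix n n ℂ) (hA : IsTester A ρ) (hB : IsTester B ρ) :
    (∀ lam ∈ Set.Icc (0:ℝ) 1,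
      POVMLambdaCompatibleOn ((1 : Matrix m m ℂ) ⊗ₖ suppProj hA.1.1.1)
        (canonicalPOVM A hA.1.1.1) (canonicalPOVM B hA.1.1.1) lam →
      TesterLambdaCompatible A B lam) ∧
    TesterRobustness A B ≤
      POVMRobustnessOn ((1 : Matrix m m ℂ) ⊗ₖ suppProj hA.1.1.1)
        (canonicalPOVM A hA.1.1.1) (canonicalPOVM B hA.1.1.1) := by
  -- `sInf ∅ = 0`, so the POVM side needs a witness; `lam = 1` always is one.
  have hone : POVMLambdaCompatibleOn ((1 : Matrix m m ℂ) ⊗ₖ suppProj hA.1.1.1)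
      (canonicalPOVM A hA.1.1.1) (canonicalPOVM B hA.1.1.1) 1 := by
    rcases isEmpty_or_nonempty m with hm | hm
    · exact povmLambdaCompatibleOn_of_isEmpty 1
    · have := hA.nonempty
      have := hB.nonempty
      exact povmLambdaCompatibleOn_one (.kronecker .one (suppProj_posSemidef _))
  refine ⟨fun lam _ => hA.testerLambdaCompatible_of_canonicalPOVM hB,
    csInf_le_csInf ⟨0, fun _ h => h.1.1⟩ ⟨1, ⟨by norm_num, hone⟩⟩ ?_⟩
  exact fun lam h => ⟨h.1, hA.testerLambdaCompatible_of_canonicalPOVM hB h.2⟩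
end

section
/- For the qubit testers A = {P_{−φ/2} ⊗ P_{−θ/2}, P_{π−φ/2} ⊗ P_{−θ/2}} and B = {P_{φ/2} ⊗ P_{θ/2}, P_{φ/2−π} ⊗ P_{θ/2}}, where P_α = (1/2)(I + sin α σ_x + cos α σ_z), the robustness of incompatibility is bounded below by R_T(A,B) ≥ sin(θ/2)/(1 + sin(θ/2)). -/
open Matrix Finset
open scoped Kronecker ComplexOrder

/-- The qubit projector onto the pure state with Bloch vector `(sin α, 0, cos α)`. -/
noncomputable def Pproj (α : ℝ) : Matrix (Fin 2) (Fin 2) ℂ :=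
  (1/2 : ℝ) • ((1 : Matrix (Fin 2) (Fin 2) ℂ) +
    Real.sin α • (!![0, 1; 1, 0] : Matrix (Fin 2) (Fin 2) ℂ) +
    Real.cos α • (!![1, 0; 0, -1] : Matrix (Fin 2) (Fin 2) ℂ))

/-! If `A` and `B` are `λ`-compatible, the joint tester of the noisy testers has a total sum
which, computed through either marginal, equals `1 ⊗ ((1-λ)ρ + λρ')` and `1 ⊗ ((1-λ)σ + λσ')`
with `ρ'`, `σ'` the normalization states of the noise. Hence the normalization states `ρ`, `σ`
are themselves `λ`-compatible and `R_T(A,B) ≥ R_S(ρ,σ)`. For states, any effect `0 ≤ E ≤ 1` with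
`tr E(ρ - σ) = d` gives `(1-λ) d = λ tr E(σ' - ρ') ≤ λ`, i.e. `λ ≥ d/(1+d)`. For
`ρ = P_{-θ/2}`, `σ = P_{θ/2}` the effect `E = P_{-π/2}` achieves `d = sin(θ/2)`. -/

open scoped MatrixOrder in
theorem Matrix.PosSemidef.trace_mul_nonneg {𝕜 n : Type*} [RCLike 𝕜] [Fintype n] [DecidableEq n]
    {A B : Matrix n n 𝕜} (hA : A.PosSemidef) (hB : B.PosSemidef) : 0 ≤ (A * B).trace := by
  obtain ⟨a, rfl⟩ := CStarAlgebra.nonneg_iff_eq_star_mul_self.mp hA.nonneg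
  rw [star_eq_conjTranspose, mul_assoc, trace_mul_comm, mul_assoc, ← mul_assoc]
  exact (hB.mul_mul_conjTranspose_same a).trace_nonneg

theorem Matrix.one_kronecker_injective {α m n : Type*} [MulZeroOneClass α] [DecidableEq m]
    [Nonempty m] : Function.Injective ((1 : Matrix m m α) ⊗ₖ · : Matrix n n α → _) := by
  intro X Y h
  ext a b
  obtain ⟨i⟩ := ‹Nonempty m›
  simpa using congr_fun₂ h (i, a) (i, b)

theorem isDensity_inv_card_smul_one {n : Type*} [Fintype n] [DecidableEq n] [Nonempty n] :
    IsDensity ((Fintype.card n : ℂ)⁻¹ • (1 : Matrix n n ℂ)) := by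
  refine ⟨PosSemidef.one.smul (by positivity), ?_⟩
  simp [trace_smul]

theorem IsDensity.re_trace_mul_mem_Icc {n : Type*} [Fintype n] [DecidableEq n]
    {E ρ : Matrix n n ℂ} (hρ : IsDensity ρ) (hE : E.PosSemidef) (hE' : (1 - E).PosSemidef) :
    (E * ρ).trace.re ∈ Set.Icc 0 1 := by
  have h0 := hE.trace_mul_nonneg hρ.1
  have h1 := hE'.trace_mul_nonneg hρ.1
  rw [sub_mul, one_mul, trace_sub, hρ.2] at h1
  exact ⟨by simpa using (Complex.le_def.mp h0).1, by simpa using (Complex.le_def.mp h1).1⟩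

theorem div_one_add_le_stateRobustness {n : Type*} [Fintype n] [DecidableEq n] [Nonempty n]
    {E ρ σ : Matrix n n ℂ} {d : ℝ} (hE : E.PosSemidef) (hE' : (1 - E).PosSemidef)
    (hd : (E * ρ).trace.re - (E * σ).trace.re = d) (hd0 : 0 ≤ d) :
    d / (1 + d) ≤ StateRobustness ρ σ := by
  have hτ := isDensity_inv_card_smul_one (n := n)
  refine le_csInf ⟨1, ⟨zero_le_one, le_rfl⟩, _, _, hτ, hτ, by simp⟩ ?_
  rintro lam ⟨⟨hlam, -⟩, ρ', σ', hρ', hσ', hmix⟩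
  have hmix_re := congrArg (fun X => (E * X).trace.re) hmix
  simp only [Matrix.mul_add, Matrix.mul_smul, trace_add, trace_smul, Complex.add_re,
    Complex.real_smul, Complex.re_ofReal_mul] at hmix_re
  have hρ'0 := (hρ'.re_trace_mul_mem_Icc hE hE').1
  have hσ'1 := (hσ'.re_trace_mul_mem_Icc hE hE').2
  rw [div_le_iff₀ (by positivity)]
  nlinarith

section Testers

variable {n m S S' : Type*} [Fintype n] [DecidableEq m] [Fintype S] [Fintype S']

theorem sum_inv_card_smul {M : Type*} [AddCommMonoid M] [Module ℂ M] [Nonempty S] (X : M) :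
    ∑ _ : S, (Fintype.card S : ℂ)⁻¹ • X = X := by
  rw [sum_const, card_univ, ← Nat.cast_smul_eq_nsmul ℂ, smul_smul,
    mul_inv_cancel₀ (by positivity), one_smul]

theorem isTester_uniform [Fintype m] [Nonempty S] {τ : Matrix n n ℂ} (hτ : IsDensity τ) :
    IsTester (fun _ : S => (Fintype.card S : ℂ)⁻¹ • ((1 : Matrix m m ℂ) ⊗ₖ τ)) τ := by
  refine ⟨hτ, fun _ => (PosSemidef.one.kronecker hτ.1).smul (by positivity), ?_⟩
  exact sum_inv_card_smul _

theorem testerLambdaCompatible_one [DecidableEq n] [Fintype m] [Nonempty n] [Nonempty S]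
    [Nonempty S']
    (A : S → Matrix (m × n) (m × n) ℂ) (B : S' → Matrix (m × n) (m × n) ℂ) :
    TesterLambdaCompatible A B 1 := by
  have hτ := isDensity_inv_card_smul_one (n := n)
  refine ⟨_, _, _, _, isTester_uniform (S := S) (m := m) hτ, isTester_uniform (S := S') hτ, ?_⟩
  refine ⟨_, _, isTester_uniform (S := S × S') hτ, fun j => ?_, fun k => ?_⟩
  · simp only [Fintype.card_prod, Nat.cast_mul, _root_.mul_inv_rev, mul_smul, sum_inv_card_smul]
    simp
  · simp only [Fintype.card_prod, Nat.cast_mul, mul_inv, mul_smul, sum_inv_card_smul]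
    simp

theorem TesterLambdaCompatible.exists_states_mix_eq [Nonempty m]
    {A : S → Matrix (m × n) (m × n) ℂ} {B : S' → Matrix (m × n) (m × n) ℂ}
    {ρ σ : Matrix n n ℂ} {lam : ℝ} (hA : ∑ j, A j = 1 ⊗ₖ ρ) (hB : ∑ k, B k = 1 ⊗ₖ σ)
    (h : TesterLambdaCompatible A B lam) :
    ∃ ρ' σ' : Matrix n n ℂ, IsDensity ρ' ∧ IsDensity σ' ∧
      (1 - lam) • ρ + lam • ρ' = (1 - lam) • σ + lam • σ' := by
  obtain ⟨NA, NB, ρ', σ', hNA, hNB, C, -, -, hCA, hCB⟩ := h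
  refine ⟨ρ', σ', hNA.1, hNB.1, one_kronecker_injective (m := m) ?_⟩
  have hmix : ∀ X Y : Matrix n n ℂ, (1 : Matrix m m ℂ) ⊗ₖ ((1 - lam) • X + lam • Y) =
      (1 - lam) • (1 ⊗ₖ X) + lam • (1 ⊗ₖ Y) := by
    intro X Y
    rw [kronecker_add, kronecker_smul, kronecker_smul]
  calc (1 : Matrix m m ℂ) ⊗ₖ ((1 - lam) • ρ + lam • ρ')
      = ∑ j, ∑ k, C (j, k) := by
        simp only [hmix, ← hA, ← hNA.2.2, hCA, sum_add_distrib, smul_sum]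
    _ = ∑ k, ∑ j, C (j, k) := sum_comm
    _ = (1 : Matrix m m ℂ) ⊗ₖ ((1 - lam) • σ + lam • σ') := by
        simp only [hmix, ← hB, ← hNB.2.2, hCB, sum_add_distrib, smul_sum]

theorem stateRobustness_le_testerRobustness [DecidableEq n] [Fintype m] [Nonempty m] [Nonempty n]
    [Nonempty S] [Nonempty S']
    {A : S → Matrix (m × n) (m × n) ℂ} {B : S' → Matrix (m × n) (m × n) ℂ}
    {ρ σ : Matrix n n ℂ} (hA : ∑ j, A j = 1 ⊗ₖ ρ) (hB : ∑ k, B k = 1 ⊗ₖ σ) :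
    StateRobustness ρ σ ≤ TesterRobustness A B :=
  csInf_le_csInf ⟨0, fun _ h => h.1.1⟩ ⟨1, ⟨zero_le_one, le_rfl⟩, testerLambdaCompatible_one A B⟩
    fun _ ⟨hI, h⟩ => ⟨hI, h.exists_states_mix_eq hA hB⟩

end Testers

theorem Pproj_add_pi (α : ℝ) : Pproj (α + Real.pi) = 1 - Pproj α := by
  simp only [Pproj, Real.sin_add_pi, Real.cos_add_pi]
  module

theorem Pproj_sub_pi (α : ℝ) : Pproj (α - Real.pi) = 1 - Pproj α := by
  simp only [Pproj, Real.sin_sub_pi, Real.cos_sub_pi]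
  module

theorem Pproj_eq_vecMulVec (α : ℝ) :
    Pproj α = vecMulVec ![(Real.cos (α / 2) : ℂ), Real.sin (α / 2)]
      (star ![(Real.cos (α / 2) : ℂ), Real.sin (α / 2)]) := by
  obtain ⟨β, rfl⟩ : ∃ β, α = 2 * β := ⟨α / 2, by ring⟩
  have hβ : (Real.sin β : ℂ) ^ 2 + (Real.cos β : ℂ) ^ 2 = 1 := by
    exact_mod_cast Real.sin_sq_add_cos_sq β
  ext i j
  fin_cases i <;> fin_cases j <;>
    simp [Pproj, vecMulVec, Real.sin_two_mul, Real.cos_two_mul, mul_div_cancel_left₀] <;>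
    simp only [← Complex.ofReal_cos, ← Complex.ofReal_sin, Complex.conj_ofReal]
  · ring
  · ring
  · ring
  · linear_combination -hβ

theorem Pproj_posSemidef (α : ℝ) : (Pproj α).PosSemidef :=
  Pproj_eq_vecMulVec α ▸ posSemidef_vecMulVec_self_star _

theorem trace_Pproj_mul_Pproj (α β : ℝ) :
    (Pproj α * Pproj β).trace = ((1 + Real.cos (α - β)) / 2 : ℝ) := by
  simp [Pproj, trace_fin_two, mul_apply, Fin.sum_univ_two, Real.cos_sub]
  ring

theorem re_trace_Pproj_neg_pi_div_two_mul_sub (θ : ℝ) :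
    (Pproj (-(Real.pi / 2)) * Pproj (-θ / 2)).trace.re -
      (Pproj (-(Real.pi / 2)) * Pproj (θ / 2)).trace.re = Real.sin (θ / 2) := by
  rw [trace_Pproj_mul_Pproj, trace_Pproj_mul_Pproj, Complex.ofReal_re, Complex.ofReal_re,
    show -(Real.pi / 2) - -θ / 2 = θ / 2 - Real.pi / 2 by ring,
    show -(Real.pi / 2) - θ / 2 = -(θ / 2 + Real.pi / 2) by ring,
    Real.cos_sub_pi_div_two, Real.cos_neg, Real.cos_add_pi_div_two]
  ring

/-- for the qubit testers probing linear polarizations, the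
robustness of incompatibility is bounded below by `sin(θ/2)/(1 + sin(θ/2))`. -/
theorem stmt19 (θ φ : ℝ) (hθ : θ ∈ Set.Icc 0 Real.pi)
    (A B : Fin 2 → Matrix (Fin 2 × Fin 2) (Fin 2 × Fin 2) ℂ)
    (hAdef : A = ![Pproj (-φ/2) ⊗ₖ Pproj (-θ/2),
                   Pproj (Real.pi - φ/2) ⊗ₖ Pproj (-θ/2)])
    (hBdef : B = ![Pproj (φ/2) ⊗ₖ Pproj (θ/2),
                   Pproj (φ/2 - Real.pi) ⊗ₖ Pproj (θ/2)]) :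
    Real.sin (θ/2) / (1 + Real.sin (θ/2)) ≤ TesterRobustness A B := by
  have hA : ∑ j, A j = 1 ⊗ₖ Pproj (-θ / 2) := by
    rw [hAdef, Fin.sum_univ_two, cons_val_zero, cons_val_one, cons_val_zero, ← add_kronecker,
      sub_eq_neg_add, ← neg_div, Pproj_add_pi, add_sub_cancel]
  have hB : ∑ k, B k = 1 ⊗ₖ Pproj (θ / 2) := by
    rw [hBdef, Fin.sum_univ_two, cons_val_zero, cons_val_one, cons_val_zero, ← add_kronecker,
      Pproj_sub_pi, add_sub_cancel]
  have hs : 0 ≤ Real.sin (θ / 2) :=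
    Real.sin_nonneg_of_nonneg_of_le_pi (by linarith [hθ.1]) (by linarith [hθ.2, Real.pi_pos])
  calc Real.sin (θ / 2) / (1 + Real.sin (θ / 2))
      ≤ StateRobustness (Pproj (-θ / 2)) (Pproj (θ / 2)) :=
        div_one_add_le_stateRobustness (Pproj_posSemidef _)
          (by rw [← Pproj_add_pi]; exact Pproj_posSemidef _)
          (re_trace_Pproj_neg_pi_div_two_mul_sub θ) hs
    _ ≤ TesterRobustness A B := stateRobustness_le_testerRobustness hA hB
end
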